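/- The minimum classical extension of IA₁ is IA₁ itself: the Gödel–Gentzen negative translations of all axioms of IA₁ are provable in IA₁, and the negative translations of its rules of inference are admissible for IA₁; hence (IA₁)^{+g} = IA₁. -/

import Mathlib

/-!
A deep embedding of the two-sorted language of intuitionistic analysis
(Kleene-Vesley), with number variables and one-place function (choice
sequence) variables, finitely many constants for primitive recursive
function(al)s (successor, +, ·, truncated subtraction ∸, pairing ⟨·,·⟩,
finite-sequence coding: concatenation *, singleton code ⟨s⟩, empty code ⟨⟩,
length lh, the Seq predicate, Kleene's T-predicate and U-function, and the
course-of-values functional ᾱ(x)), λ-abstraction with λ-reduction,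
intuitionistic two-sorted predicate logic, the Gödel–Gentzen negative
translation g, and the axiom schemas of the paper
"Calibrating the negative interpretation" (J.R. Moschovakis).
-/

namespace NegInterp

/-! Terms (type 0) and functors (type 1). -/
mutual
inductive Term : Type
  | var   : ℕ → Term
  | zero  : Term
  | succ  : Term → Term
  | add   : Term → Term → Term
  | mul   : Term → Term → Term
  | sub   : Term → Term → Term           -- truncated subtraction
  | pair  : Term → Term → Term           -- ⟨s,t⟩
  | cat   : Term → Term → Term           -- concatenation w ∗ v of sequence codes
  | sing  : Term → Term                  -- ⟨s⟩
  | empt  : Term                         -- ⟨ ⟩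
  | lh    : Term → Term                  -- length of a sequence code
  | seqc  : Term → Term                  -- characteristic function of Seq
  | kT    : Term → Term → Term → Term    -- characteristic function of Kleene's T
  | kU    : Term → Term                  -- Kleene's result-extraction U
  | app   : Func → Term → Term           -- φ(t)
  | bar   : Func → Term → Term           -- ᾱ(t), the code of (α(0),…,α(t−1))
inductive Func : Type
  | fvar : ℕ → Func
  | lam  : ℕ → Term → Func               -- λx.t
end

open Term Func

/-- Coding of finite sequences of naturals by naturals (every natural is a code). -/
def listCode (l : List ℕ) : ℕ := Encodable.encode l
def listDec (n : ℕ) : List ℕ := Denumerable.ofNat (List ℕ) n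

/-- Kleene's T-predicate: y codes a (fuel, value) pair witnessing that the
machine with code e halts on input x with the given value. -/
def KTmeta (e x y : ℕ) : Prop :=
  Nat.Partrec.Code.evaln y.unpair.1 (Denumerable.ofNat Nat.Partrec.Code e) x = some y.unpair.2

instance (e x y : ℕ) : Decidable (KTmeta e x y) := by unfold KTmeta; infer_instance

/-! Standard (full classical ω-model) interpretation of terms and functors,
used only to state the defining axioms of the primitive recursive constants. -/
mutual
def evalT (ρ : ℕ → ℕ) (σ : ℕ → ℕ → ℕ) : Term → ℕ
  | .var n => ρ n
  | .zero => 0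
  | .succ t => evalT ρ σ t + 1
  | .add s t => evalT ρ σ s + evalT ρ σ t
  | .mul s t => evalT ρ σ s * evalT ρ σ t
  | .sub s t => evalT ρ σ s - evalT ρ σ t
  | .pair s t => Nat.pair (evalT ρ σ s) (evalT ρ σ t)
  | .cat s t => listCode (listDec (evalT ρ σ s) ++ listDec (evalT ρ σ t))
  | .sing t => listCode [evalT ρ σ t]
  | .empt => listCode []
  | .lh t => (listDec (evalT ρ σ t)).length
  | .seqc _ => 0      -- under this coding every number codes a finite sequence
  | .kT e x y => if KTmeta (evalT ρ σ e) (evalT ρ σ x) (evalT ρ σ y) then 0 else 1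
  | .kU y => (Nat.unpair (evalT ρ σ y)).2
  | .app φ t => evalF ρ σ φ (evalT ρ σ t)
  | .bar φ t => listCode ((List.range (evalT ρ σ t)).map (evalF ρ σ φ))
def evalF (ρ : ℕ → ℕ) (σ : ℕ → ℕ → ℕ) : Func → ℕ → ℕ
  | .fvar n => σ n
  | .lam x t => fun m => evalT (Function.update ρ x m) σ t
end

/-! Free number variables of a term / functor. -/
mutual
def tFN : Term → Set ℕ
  | .var n => {n}
  | .zero => ∅
  | .empt => ∅
  | .succ t => tFN t
  | .sing t => tFN t
  | .lh t => tFN t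
  | .seqc t => tFN t
  | .kU t => tFN t
  | .add s t => tFN s ∪ tFN t
  | .mul s t => tFN s ∪ tFN t
  | .sub s t => tFN s ∪ tFN t
  | .pair s t => tFN s ∪ tFN t
  | .cat s t => tFN s ∪ tFN t
  | .kT e x y => tFN e ∪ tFN x ∪ tFN y
  | .app φ t => fFN φ ∪ tFN t
  | .bar φ t => fFN φ ∪ tFN t
def fFN : Func → Set ℕ
  | .fvar _ => ∅
  | .lam x t => tFN t \ {x}
end

/-! Free function variables of a term / functor. -/
mutual
def tFF : Term → Set ℕ
  | .var _ => ∅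
  | .zero => ∅
  | .empt => ∅
  | .succ t => tFF t
  | .sing t => tFF t
  | .lh t => tFF t
  | .seqc t => tFF t
  | .kU t => tFF t
  | .add s t => tFF s ∪ tFF t
  | .mul s t => tFF s ∪ tFF t
  | .sub s t => tFF s ∪ tFF t
  | .pair s t => tFF s ∪ tFF t
  | .cat s t => tFF s ∪ tFF t
  | .kT e x y => tFF e ∪ tFF x ∪ tFF y
  | .app φ t => fFF φ ∪ tFF t
  | .bar φ t => fFF φ ∪ tFF t
def fFF : Func → Set ℕ
  | .fvar a => {a}
  | .lam _ t => tFF t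
end

/-! Substitution of a term for a number variable in terms / functors. -/
mutual
def tSubN (n : ℕ) (u : Term) : Term → Term
  | .var m => if m = n then u else .var m
  | .zero => .zero
  | .empt => .empt
  | .succ t => .succ (tSubN n u t)
  | .sing t => .sing (tSubN n u t)
  | .lh t => .lh (tSubN n u t)
  | .seqc t => .seqc (tSubN n u t)
  | .kU t => .kU (tSubN n u t)
  | .add s t => .add (tSubN n u s) (tSubN n u t)
  | .mul s t => .mul (tSubN n u s) (tSubN n u t)
  | .sub s t => .sub (tSubN n u s) (tSubN n u t)
  | .pair s t => .pair (tSubN n u s) (tSubN n u t)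
  | .cat s t => .cat (tSubN n u s) (tSubN n u t)
  | .kT e x y => .kT (tSubN n u e) (tSubN n u x) (tSubN n u y)
  | .app φ t => .app (fSubN n u φ) (tSubN n u t)
  | .bar φ t => .bar (fSubN n u φ) (tSubN n u t)
def fSubN (n : ℕ) (u : Term) : Func → Func
  | .fvar a => .fvar a
  | .lam x t => if x = n then .lam x t else .lam x (tSubN n u t)
end

/-! Substitution of a functor for a function variable in terms / functors. -/
mutual
def tSubF (a : ℕ) (ψ : Func) : Term → Term
  | .var m => .var m
  | .zero => .zero
  | .empt => .empt
  | .succ t => .succ (tSubF a ψ t)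
  | .sing t => .sing (tSubF a ψ t)
  | .lh t => .lh (tSubF a ψ t)
  | .seqc t => .seqc (tSubF a ψ t)
  | .kU t => .kU (tSubF a ψ t)
  | .add s t => .add (tSubF a ψ s) (tSubF a ψ t)
  | .mul s t => .mul (tSubF a ψ s) (tSubF a ψ t)
  | .sub s t => .sub (tSubF a ψ s) (tSubF a ψ t)
  | .pair s t => .pair (tSubF a ψ s) (tSubF a ψ t)
  | .cat s t => .cat (tSubF a ψ s) (tSubF a ψ t)
  | .kT e x y => .kT (tSubF a ψ e) (tSubF a ψ x) (tSubF a ψ y)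
  | .app φ t => .app (fSubF a ψ φ) (tSubF a ψ t)
  | .bar φ t => .bar (fSubF a ψ φ) (tSubF a ψ t)
def fSubF (a : ℕ) (ψ : Func) : Func → Func
  | .fvar b => if b = a then ψ else .fvar b
  | .lam x t => .lam x (tSubF a ψ t)
end

/-! "u is free for (the number variable) n" in a term/functor
(no free occurrence of n lies within a λ binding a variable free in u). -/
mutual
def tFForN (u : Term) (n : ℕ) : Term → Prop
  | .var _ => True
  | .zero => True
  | .empt => True
  | .succ t => tFForN u n t
  | .sing t => tFForN u n t
  | .lh t => tFForN u n t
  | .seqc t => tFForN u n t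
  | .kU t => tFForN u n t
  | .add s t => tFForN u n s ∧ tFForN u n t
  | .mul s t => tFForN u n s ∧ tFForN u n t
  | .sub s t => tFForN u n s ∧ tFForN u n t
  | .pair s t => tFForN u n s ∧ tFForN u n t
  | .cat s t => tFForN u n s ∧ tFForN u n t
  | .kT e x y => tFForN u n e ∧ tFForN u n x ∧ tFForN u n y
  | .app φ t => fFForN u n φ ∧ tFForN u n t
  | .bar φ t => fFForN u n φ ∧ tFForN u n t
def fFForN (u : Term) (n : ℕ) : Func → Prop
  | .fvar _ => True
  | .lam x t => x = n ∨ n ∉ tFN t ∨ (x ∉ tFN u ∧ tFForN u n t)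
end

/-! "ψ is free for (the function variable) a" in a term/functor. -/
mutual
def tFForF (ψ : Func) (a : ℕ) : Term → Prop
  | .var _ => True
  | .zero => True
  | .empt => True
  | .succ t => tFForF ψ a t
  | .sing t => tFForF ψ a t
  | .lh t => tFForF ψ a t
  | .seqc t => tFForF ψ a t
  | .kU t => tFForF ψ a t
  | .add s t => tFForF ψ a s ∧ tFForF ψ a t
  | .mul s t => tFForF ψ a s ∧ tFForF ψ a t
  | .sub s t => tFForF ψ a s ∧ tFForF ψ a t
  | .pair s t => tFForF ψ a s ∧ tFForF ψ a t
  | .cat s t => tFForF ψ a s ∧ tFForF ψ a t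
  | .kT e x y => tFForF ψ a e ∧ tFForF ψ a x ∧ tFForF ψ a y
  | .app φ t => fFForF ψ a φ ∧ tFForF ψ a t
  | .bar φ t => fFForF ψ a φ ∧ tFForF ψ a t
def fFForF (ψ : Func) (a : ℕ) : Func → Prop
  | .fvar _ => True
  | .lam x t => a ∉ tFF t ∨ (x ∉ fFN ψ ∧ tFForF ψ a t)
end

/-- Formulas of the two-sorted language; prime formulas are equations between
terms of type 0 (equality of type 1 is defined extensionally). -/
inductive Formula : Type
  | eq     : Term → Term → Formula
  | falsum : Formula
  | and    : Formula → Formula → Formula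
  | or     : Formula → Formula → Formula
  | imp    : Formula → Formula → Formula
  | allN   : ℕ → Formula → Formula
  | exN    : ℕ → Formula → Formula
  | allF   : ℕ → Formula → Formula
  | exF    : ℕ → Formula → Formula

namespace Formula

/-- ¬A -/
def neg (A : Formula) : Formula := A.imp .falsum
/-- ¬¬A -/
def nneg (A : Formula) : Formula := neg (neg A)
/-- A ↔ B -/
def iff (A B : Formula) : Formula := (A.imp B).and (B.imp A)

end Formula

open Formula

/-- s ≤ t, expressed by the primitive recursive constant ∸. -/
def tle (s t : Term) : Formula := .eq (Term.sub s t) Term.zero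
/-- s < t -/
def tlt (s t : Term) : Formula := tle (Term.succ s) t
/-- Seq(w) : w codes a finite sequence. -/
def seqF (t : Term) : Formula := .eq (Term.seqc t) Term.zero

/-- Free number variables of a formula. -/
def freeN : Formula → Set ℕ
  | .eq s t => tFN s ∪ tFN t
  | .falsum => ∅
  | .and A B => freeN A ∪ freeN B
  | .or A B => freeN A ∪ freeN B
  | .imp A B => freeN A ∪ freeN B
  | .allN x A => freeN A \ {x}
  | .exN x A => freeN A \ {x}
  | .allF _ A => freeN A
  | .exF _ A => freeN A

/-- Free function variables of a formula. -/
def freeF : Formula → Set ℕ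
  | .eq s t => tFF s ∪ tFF t
  | .falsum => ∅
  | .and A B => freeF A ∪ freeF B
  | .or A B => freeF A ∪ freeF B
  | .imp A B => freeF A ∪ freeF B
  | .allN _ A => freeF A
  | .exN _ A => freeF A
  | .allF a A => freeF A \ {a}
  | .exF a A => freeF A \ {a}

/-- Substitution A[u/n] of a term u for the number variable n. -/
def subN (n : ℕ) (u : Term) : Formula → Formula
  | .eq s t => .eq (tSubN n u s) (tSubN n u t)
  | .falsum => .falsum
  | .and A B => .and (subN n u A) (subN n u B)
  | .or A B => .or (subN n u A) (subN n u B)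
  | .imp A B => .imp (subN n u A) (subN n u B)
  | .allN x A => if x = n then .allN x A else .allN x (subN n u A)
  | .exN x A => if x = n then .exN x A else .exN x (subN n u A)
  | .allF a A => .allF a (subN n u A)
  | .exF a A => .exF a (subN n u A)

/-- Substitution A[ψ/a] of a functor ψ for the function variable a. -/
def subF (a : ℕ) (ψ : Func) : Formula → Formula
  | .eq s t => .eq (tSubF a ψ s) (tSubF a ψ t)
  | .falsum => .falsum
  | .and A B => .and (subF a ψ A) (subF a ψ B)
  | .or A B => .or (subF a ψ A) (subF a ψ B)
  | .imp A B => .imp (subF a ψ A) (subF a ψ B)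
  | .allN x A => .allN x (subF a ψ A)
  | .exN x A => .exN x (subF a ψ A)
  | .allF b A => if b = a then .allF b A else .allF b (subF a ψ A)
  | .exF b A => if b = a then .exF b A else .exF b (subF a ψ A)

/-- "The term u is free for the number variable n in A". -/
def FreeForN (u : Term) (n : ℕ) : Formula → Prop
  | .eq s t => tFForN u n s ∧ tFForN u n t
  | .falsum => True
  | .and A B => FreeForN u n A ∧ FreeForN u n B
  | .or A B => FreeForN u n A ∧ FreeForN u n B
  | .imp A B => FreeForN u n A ∧ FreeForN u n B
  | .allN m A => m = n ∨ n ∉ freeN A ∨ (m ∉ tFN u ∧ FreeForN u n A)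
  | .exN m A => m = n ∨ n ∉ freeN A ∨ (m ∉ tFN u ∧ FreeForN u n A)
  | .allF b A => n ∉ freeN A ∨ (b ∉ tFF u ∧ FreeForN u n A)
  | .exF b A => n ∉ freeN A ∨ (b ∉ tFF u ∧ FreeForN u n A)

/-- "The functor ψ is free for the function variable a in A". -/
def FreeForF (ψ : Func) (a : ℕ) : Formula → Prop
  | .eq s t => tFForF ψ a s ∧ tFForF ψ a t
  | .falsum => True
  | .and A B => FreeForF ψ a A ∧ FreeForF ψ a B
  | .or A B => FreeForF ψ a A ∧ FreeForF ψ a B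
  | .imp A B => FreeForF ψ a A ∧ FreeForF ψ a B
  | .allN m A => a ∉ freeF A ∨ (m ∉ fFN ψ ∧ FreeForF ψ a A)
  | .exN m A => a ∉ freeF A ∨ (m ∉ fFN ψ ∧ FreeForF ψ a A)
  | .allF b A => b = a ∨ a ∉ freeF A ∨ (b ∉ fFF ψ ∧ FreeForF ψ a A)
  | .exF b A => b = a ∨ a ∉ freeF A ∨ (b ∉ fFF ψ ∧ FreeForF ψ a A)

/-- Derivability from a set of (mathematical) axioms by two-sorted
intuitionistic predicate logic with equality at type 0 as sole prime relation;
a Hilbert-style system with modus ponens and generalization. -/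
inductive Prov (T : Set Formula) : Formula → Prop
  | ax {A : Formula} (h : A ∈ T) : Prov T A
  | k {A B : Formula} : Prov T (A.imp (B.imp A))
  | s {A B C : Formula} : Prov T ((A.imp (B.imp C)).imp ((A.imp B).imp (A.imp C)))
  | andI {A B : Formula} : Prov T (A.imp (B.imp (A.and B)))
  | andE1 {A B : Formula} : Prov T ((A.and B).imp A)
  | andE2 {A B : Formula} : Prov T ((A.and B).imp B)
  | orI1 {A B : Formula} : Prov T (A.imp (A.or B))
  | orI2 {A B : Formula} : Prov T (B.imp (A.or B))
  | orE {A B C : Formula} : Prov T ((A.imp C).imp ((B.imp C).imp ((A.or B).imp C)))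
  | exfalso {A : Formula} : Prov T (Formula.falsum.imp A)
  | mp {A B : Formula} : Prov T (A.imp B) → Prov T A → Prov T B
  | allNE {n : ℕ} {A : Formula} {u : Term} (h : FreeForN u n A) :
      Prov T ((Formula.allN n A).imp (subN n u A))
  | allNI {n : ℕ} {A B : Formula} (h : n ∉ freeN A) :
      Prov T (A.imp B) → Prov T (A.imp (Formula.allN n B))
  | exNI {n : ℕ} {A : Formula} {u : Term} (h : FreeForN u n A) :
      Prov T ((subN n u A).imp (Formula.exN n A))
  | exNE {n : ℕ} {A B : Formula} (h : n ∉ freeN B) :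
      Prov T (A.imp B) → Prov T ((Formula.exN n A).imp B)
  | allFE {a : ℕ} {A : Formula} {ψ : Func} (h : FreeForF ψ a A) :
      Prov T ((Formula.allF a A).imp (subF a ψ A))
  | allFI {a : ℕ} {A B : Formula} (h : a ∉ freeF A) :
      Prov T (A.imp B) → Prov T (A.imp (Formula.allF a B))
  | exFI {a : ℕ} {A : Formula} {ψ : Func} (h : FreeForF ψ a A) :
      Prov T ((subF a ψ A).imp (Formula.exF a A))
  | exFE {a : ℕ} {A B : Formula} (h : a ∉ freeF B) :
      Prov T (A.imp B) → Prov T ((Formula.exF a A).imp B)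
  | genN {n : ℕ} {A : Formula} : Prov T A → Prov T (Formula.allN n A)
  | genF {a : ℕ} {A : Formula} : Prov T A → Prov T (Formula.allF a A)

/-- Two systems (sets of axioms over the same language) have the same theorems. -/
def SameTheory (T₁ T₂ : Set Formula) : Prop := ∀ A, Prov T₁ A ↔ Prov T₂ A

/-- T₁ is a subsystem of T₂: every theorem of T₁ is a theorem of T₂. -/
def Subsystem (T₁ T₂ : Set Formula) : Prop := ∀ A, Prov T₁ A → Prov T₂ A

/-- The Gödel–Gentzen negative translation: hereditarily replace A∨B by
¬(¬A & ¬B) and ∃A by ¬∀¬A (prime formulas, being equations between terms of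
type 0, are their own translations). -/
def gTrans : Formula → Formula
  | .eq s t => .eq s t
  | .falsum => .falsum
  | .and A B => .and (gTrans A) (gTrans B)
  | .or A B => Formula.neg ((Formula.neg (gTrans A)).and (Formula.neg (gTrans B)))
  | .imp A B => .imp (gTrans A) (gTrans B)
  | .allN x A => .allN x (gTrans A)
  | .exN x A => Formula.neg (.allN x (Formula.neg (gTrans A)))
  | .allF a A => .allF a (gTrans A)
  | .exF a A => Formula.neg (.allF a (Formula.neg (gTrans A)))

/-! ### The base system IA₁ -/

/-- Universally valid equations: the defining axioms of the finitely many
primitive recursive constants of the language (all equations true in the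
intended interpretation under every assignment). -/
def validEq : Set Formula :=
  {F | ∃ s t : Term, F = Formula.eq s t ∧ ∀ ρ σ, evalT ρ σ s = evalT ρ σ t}

/-- Leibniz equality schema (includes the open equality axiom
∀x∀y(x=y → α(x)=α(y))). -/
def eqAx : Set Formula :=
  {F | ∃ (n : ℕ) (s t : Term) (A : Formula),
    FreeForN s n A ∧ FreeForN t n A ∧
    F = (Formula.eq s t).imp ((subN n s A).imp (subN n t A))}

/-- Successor axioms. -/
def sucAx : Set Formula :=
  {F | ∃ s t : Term, F = (Formula.eq (Term.succ s) (Term.succ t)).imp (.eq s t)} ∪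
  {F | ∃ t : Term, F = Formula.neg (.eq (Term.succ t) Term.zero)}

/-- Mathematical induction, for all formulas of the two-sorted language. -/
def indAx : Set Formula :=
  {F | ∃ (x : ℕ) (A : Formula),
    F = ((subN x Term.zero A).and
          (Formula.allN x (A.imp (subN x (Term.succ (Term.var x)) A)))).imp
        (Formula.allN x A)}

/-- λ-reduction: (λx.t)(s) = t[s/x], for s free for x in t. -/
def lamAx : Set Formula :=
  {F | ∃ (x : ℕ) (t s : Term), tFForN s x t ∧
    F = Formula.eq (Term.app (Func.lam x t) s) (tSubN x s t)}

/-- IA₁: two-sorted intuitionistic arithmetic. -/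
def IA1 : Set Formula := validEq ∪ eqAx ∪ sucAx ∪ indAx ∪ lamAx

/-- The double negation schema ¬¬A → A of classical logic. -/
def DNE : Set Formula := {F | ∃ A : Formula, F = (Formula.nneg A).imp A}

/-- The Gödel–Gentzen negative translations of all theorems of S + (¬¬A→A). -/
def gThms (S : Set Formula) : Set Formula :=
  {F | ∃ A : Formula, Prov (S ∪ DNE) A ∧ F = gTrans A}

/-- The minimum classical extension S^{+g} of S: the least extension of S
proving the negative translation of every theorem of S + (¬¬A→A). -/
def minClassExt (S : Set Formula) : Set Formula := S ∪ gThms S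

/-! ### Classes of formulas -/

/-- "Quantifier-free" formulas: no function quantifiers and only bounded
number quantifiers. -/
inductive IsQF : Formula → Prop
  | eq (s t : Term) : IsQF (.eq s t)
  | falsum : IsQF .falsum
  | and {A B} : IsQF A → IsQF B → IsQF (A.and B)
  | or {A B} : IsQF A → IsQF B → IsQF (A.or B)
  | imp {A B} : IsQF A → IsQF B → IsQF (A.imp B)
  | ballN {x t A} (h : x ∉ tFN t) (hA : IsQF A) :
      IsQF (.allN x ((tle (Term.var x) t).imp A))
  | bexN {x t A} (h : x ∉ tFN t) (hA : IsQF A) :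
      IsQF (.exN x ((tle (Term.var x) t).and A))

/-- Arithmetical formulas: no function quantifiers (function parameters allowed). -/
def IsArith : Formula → Prop
  | .eq _ _ => True
  | .falsum => True
  | .and A B => IsArith A ∧ IsArith B
  | .or A B => IsArith A ∧ IsArith B
  | .imp A B => IsArith A ∧ IsArith B
  | .allN _ A => IsArith A
  | .exN _ A => IsArith A
  | .allF _ _ => False
  | .exF _ _ => False

/-- Negative formulas: containing neither ∨ nor ∃. -/
def IsNeg : Formula → Prop
  | .eq _ _ => True
  | .falsum => True
  | .and A B => IsNeg A ∧ IsNeg B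
  | .or _ _ => False
  | .imp A B => IsNeg A ∧ IsNeg B
  | .allN _ A => IsNeg A
  | .exN _ _ => False
  | .allF _ A => IsNeg A
  | .exF _ _ => False

/-! ### The axiom schemas -/

/-- An instance of countable choice AC₀₀ : ∀x∃yA(x,y) → ∃α∀xA(x,α(x)). -/
def ac00Inst (x y a : ℕ) (A : Formula) : Formula :=
  (Formula.allN x (.exN y A)).imp
    (.exF a (.allN x (subN y (Term.app (Func.fvar a) (Term.var x)) A)))

def ac00Side (x y a : ℕ) (A : Formula) : Prop :=
  x ≠ y ∧ a ∉ freeF A ∧ FreeForN (Term.app (Func.fvar a) (Term.var x)) y A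

/-- AC₀₀ (full countable choice for numbers). -/
def AC00 : Set Formula :=
  {F | ∃ x y a A, ac00Side x y a A ∧ F = ac00Inst x y a A}

/-- qf-AC₀₀. -/
def qfAC00 : Set Formula :=
  {F | ∃ x y a A, IsQF A ∧ ac00Side x y a A ∧ F = ac00Inst x y a A}

/-- AC^Ar₀₀ (arithmetical countable choice). -/
def arAC00 : Set Formula :=
  {F | ∃ x y a A, IsArith A ∧ ac00Side x y a A ∧ F = ac00Inst x y a A}

/-- ∃!y A, rendered as ∃yA & ∀y∀z(A & A[z/y] → y = z). -/
def exUnique (y z : ℕ) (A : Formula) : Formula :=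
  (Formula.exN y A).and
    (.allN y (.allN z ((A.and (subN y (Term.var z) A)).imp
      (.eq (Term.var y) (Term.var z)))))

/-- AC₀₀! (countable comprehension): ∀x∃!yA(x,y) → ∃α∀xA(x,α(x)). -/
def AC00u : Set Formula :=
  {F | ∃ x y z a A, z ≠ y ∧ z ∉ freeN A ∧ FreeForN (Term.var z) y A ∧
    ac00Side x y a A ∧
    F = (Formula.allN x (exUnique y z A)).imp
          (.exF a (.allN x (subN y (Term.app (Func.fvar a) (Term.var x)) A)))}

/-- AC₀₁ : ∀x∃αA(x,α) → ∃β∀xA(x,λy.β(⟨x,y⟩)). -/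
def AC01 : Set Formula :=
  {F | ∃ (x a b y : ℕ) (A : Formula), b ∉ freeF A ∧ b ≠ a ∧ y ≠ x ∧
    FreeForF (Func.lam y (Term.app (Func.fvar b)
      (Term.pair (Term.var x) (Term.var y)))) a A ∧
    F = (Formula.allN x (.exF a A)).imp
          (.exF b (.allN x (subF a (Func.lam y (Term.app (Func.fvar b)
            (Term.pair (Term.var x) (Term.var y)))) A)))}

/-- CF_d : ∀x(A(x) ∨ ¬A(x)) → ∃α∀x[α(x)≤1 & (α(x)=0 ↔ A(x))]. -/
def CFd : Set Formula :=
  {F | ∃ (x a : ℕ) (A : Formula), a ∉ freeF A ∧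
    F = (Formula.allN x (A.or (Formula.neg A))).imp
          (.exF a (.allN x ((tle (Term.app (Func.fvar a) (Term.var x))
              (Term.succ Term.zero)).and
            (Formula.iff (.eq (Term.app (Func.fvar a) (Term.var x)) Term.zero) A))))}

/-- WCF₀⁻ : ¬¬∃ζ∀x(ζ(x)=0 ↔ A(x)) for negative A. -/
def WCF0neg : Set Formula :=
  {F | ∃ (x z : ℕ) (A : Formula), IsNeg A ∧ z ∉ freeF A ∧
    F = Formula.nneg (.exF z (.allN x
      (Formula.iff (.eq (Term.app (Func.fvar z) (Term.var x)) Term.zero) A)))}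

/-- Markov's Principle MP₁ : ∀α(¬∀x¬α(x)=0 → ∃x α(x)=0). -/
def MP1 : Formula :=
  .allF 0 ((Formula.neg (.allN 0 (Formula.neg
      (.eq (Term.app (Func.fvar 0) (Term.var 0)) Term.zero)))).imp
    (.exN 0 (.eq (Term.app (Func.fvar 0) (Term.var 0)) Term.zero)))

/-- Σ⁰₁-DNS₀ : ∀α[∀x¬¬∃y α(⟨x,y⟩)=0 → ¬¬∀x∃y α(⟨x,y⟩)=0]. -/
def Sigma01DNS0 : Formula :=
  .allF 0 ((Formula.allN 0 (Formula.nneg (.exN 1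
      (.eq (Term.app (Func.fvar 0) (Term.pair (Term.var 0) (Term.var 1))) Term.zero)))).imp
    (Formula.nneg (.allN 0 (.exN 1
      (.eq (Term.app (Func.fvar 0) (Term.pair (Term.var 0) (Term.var 1))) Term.zero)))))

/-- DNS₁ : ∀ρ[∀α¬¬∃x ρ(ᾱ(x))=0 → ¬¬∀α∃x ρ(ᾱ(x))=0]. -/
def DNS1 : Formula :=
  .allF 0 ((Formula.allF 1 (Formula.nneg (.exN 0
      (.eq (Term.app (Func.fvar 0) (Term.bar (Func.fvar 1) (Term.var 0))) Term.zero)))).imp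
    (Formula.nneg (.allF 1 (.exN 0
      (.eq (Term.app (Func.fvar 0) (Term.bar (Func.fvar 1) (Term.var 0))) Term.zero)))))

/-- B(α) : α is a binary sequence, ∀x α(x) ≤ 1. -/
def binF (a x : ℕ) : Formula :=
  .allN x (tle (Term.app (Func.fvar a) (Term.var x)) (Term.succ Term.zero))

/-- GDK : ∀ρ[∀α_{B(α)}¬¬∃x ρ(ᾱ(x))=0 → ¬¬∀α_{B(α)}∃x ρ(ᾱ(x))=0]. -/
def GDK : Formula :=
  .allF 0 ((Formula.allF 1 ((binF 1 1).imp (Formula.nneg (.exN 0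
      (.eq (Term.app (Func.fvar 0) (Term.bar (Func.fvar 1) (Term.var 0))) Term.zero))))).imp
    (Formula.nneg (.allF 1 ((binF 1 1).imp (.exN 0
      (.eq (Term.app (Func.fvar 0) (Term.bar (Func.fvar 1) (Term.var 0))) Term.zero))))))

/-- FT₁ (the fan theorem):
∀ρ[∀α_{B(α)}∃x ρ(ᾱ(x))=0 → ∃n∀α_{B(α)}∃x≤n ρ(ᾱ(x))=0]. -/
def FT1 : Formula :=
  .allF 0 ((Formula.allF 1 ((binF 1 1).imp (.exN 0
      (.eq (Term.app (Func.fvar 0) (Term.bar (Func.fvar 1) (Term.var 0))) Term.zero)))).imp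
    (.exN 2 (.allF 1 ((binF 1 1).imp (.exN 0 ((tle (Term.var 0) (Term.var 2)).and
      (.eq (Term.app (Func.fvar 0) (Term.bar (Func.fvar 1) (Term.var 0))) Term.zero)))))))

/-- An instance of bar induction BI₁ with bar ρ (function variable r) and
inductive predicate A(w). -/
def biInst (r aa xv w s : ℕ) (A : Formula) : Formula :=
  ((Formula.allF aa (.exN xv (.eq
      (Term.app (Func.fvar r) (Term.bar (Func.fvar aa) (Term.var xv))) Term.zero))).and
    ((Formula.allN w (((seqF (Term.var w)).and
        (.eq (Term.app (Func.fvar r) (Term.var w)) Term.zero)).imp A)).and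
      (Formula.allN w (((seqF (Term.var w)).and
        (.allN s (subN w (Term.cat (Term.var w)
          (Term.sing (Term.succ (Term.var s)))) A))).imp A)))).imp
  (subN w Term.empt A)

/-- BI₁ (bar induction, Kleene's ˣ26.3b). -/
def BI1 : Set Formula :=
  {F | ∃ r aa xv w s A, aa ≠ r ∧ aa ∉ freeF A ∧ s ≠ w ∧ s ∉ freeN A ∧
    FreeForN (Term.cat (Term.var w) (Term.sing (Term.succ (Term.var s)))) w A ∧
    F = biInst r aa xv w s A}

/-- Π⁰₁-WCF₀ : ∀α¬¬∃ζ∀x(ζ(x)=0 ↔ ∀y α(⟨x,y⟩)=0). -/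
def Pi01WCF0 : Formula :=
  .allF 0 (Formula.nneg (.exF 1 (.allN 0
    (Formula.iff (.eq (Term.app (Func.fvar 1) (Term.var 0)) Term.zero)
      (.allN 1 (.eq (Term.app (Func.fvar 0)
        (Term.pair (Term.var 0) (Term.var 1))) Term.zero))))))

/-- Π¹₁-WCF₀ : ∀γ¬¬∃ζ∀x(ζ(x)=0 ↔ ∀α∃y γ(ᾱ(⟨x,y⟩))=0). -/
def Pi11WCF0 : Formula :=
  .allF 0 (Formula.nneg (.exF 1 (.allN 0
    (Formula.iff (.eq (Term.app (Func.fvar 1) (Term.var 0)) Term.zero)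
      (.allF 2 (.exN 1 (.eq (Term.app (Func.fvar 0)
        (Term.bar (Func.fvar 2) (Term.pair (Term.var 0) (Term.var 1)))) Term.zero)))))))

/-- T(e,x,y) as a formula. -/
def TFml (e x y : Term) : Formula := .eq (Term.kT e x y) Term.zero

/-- GR(φ): "φ is general recursive",
∃e[∀x∃yT(e,x,y) & ∀x∀y(T(e,x,y) → U(y)=φ(x))]. -/
def GRof (φ : Func) : Formula :=
  .exN 0 ((Formula.allN 1 (.exN 2 (TFml (Term.var 0) (Term.var 1) (Term.var 2)))).and
    (.allN 1 (.allN 2 ((TFml (Term.var 0) (Term.var 1) (Term.var 2)).imp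
      (.eq (Term.kU (Term.var 2)) (Term.app φ (Term.var 1)))))))

/-- Church's Thesis CT₁ : ∀α GR(α). -/
def CT1 : Formula := .allF 0 (GRof (Func.fvar 0))

/-- ∀α¬¬GR(α). -/
def nnGR : Formula := .allF 0 (Formula.nneg (GRof (Func.fvar 0)))

/-- {τ}[α](x) = y in Kleene's sense: τ(⟨x⟩∗ᾱ(y)) > 0 with minimal y,
used to state continuous choice. -/
def ccApp (t a x y : ℕ) : Formula :=
  .eq (Term.app (Func.fvar t)
    (Term.cat (Term.sing (Term.var x)) (Term.bar (Func.fvar a) (Term.var y)))) Term.zero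

/-- An instance of Kleene's strong continuous choice CC₁₁ (Brouwer's principle
for functions, ˣ27.1): ∀α∃βA(α,β) → ∃τ∀α[{τ}[α] is completely defined &
∀β({τ}[α] = β → A(α,β))]. -/
def cc11Inst (a b t x y z : ℕ) (A : Formula) : Formula :=
  (Formula.allF a (.exF b A)).imp
    (.exF t (.allF a
      ((Formula.allN x (.exN y (Formula.neg (ccApp t a x y)))).and
        (.allF b ((Formula.allN x (.exN y
          ((Formula.eq (Term.app (Func.fvar t) (Term.cat (Term.sing (Term.var x))
              (Term.bar (Func.fvar a) (Term.var y))))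
            (Term.succ (Term.app (Func.fvar b) (Term.var x)))).and
           (.allN z ((tlt (Term.var z) (Term.var y)).imp (ccApp t a x z)))))).imp A)))))

/-- CC₁₁ as a schema. -/
def CC11 : Set Formula :=
  {F | ∃ a b t x y z A, t ∉ freeF A ∧ t ≠ a ∧ t ≠ b ∧ a ≠ b ∧
    x ∉ freeN A ∧ y ∉ freeN A ∧ z ∉ freeN A ∧
    x ≠ y ∧ y ≠ z ∧ x ≠ z ∧
    F = cc11Inst a b t x y z A}

/-! ### The systems -/

/-- Intuitionistic recursive analysis IRA = IA₁ + qf-AC₀₀. -/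
def IRA : Set Formula := IA1 ∪ qfAC00

/-- Kleene's basic system B = IA₁ + AC₀₁ + BI₁. -/
def Bsys : Set Formula := IA1 ∪ AC01 ∪ BI1

/-- Markov's recursive analysis MRA = IRA + CT₁ + MP₁. -/
def MRA : Set Formula := IRA ∪ {CT1, MP1}

/-- The subsystems of B considered in Theorem 5.1. -/
def theoremSystems : List (Set Formula) :=
  [IA1, IRA, IA1 ∪ arAC00, IA1 ∪ AC00u, IA1 ∪ AC00, IA1 ∪ AC01,
   IA1 ∪ {FT1}, IRA ∪ {FT1}, IRA ∪ BI1, IA1 ∪ AC00 ∪ BI1, Bsys]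

end NegInterp

/-!
Every negative translation is stable in IA₁: IA₁ ⊢ ¬¬Aᵍ → Aᵍ. For prime formulas this is
decidability, since s = t is equivalent to |s − t| = 0 and u = 0 ∨ u ≠ 0 holds by induction;
stability is preserved by &, → and both universal quantifiers, and holds outright for negations,
which is what ∨ and ∃ become. The axioms of IA₁ are closed under the translation, which commutes
with substitution, and the translation of ¬¬A → A is a stability statement. Of the logical rules
only ∨- and ∃-elimination change shape, and their translations follow from stability of the
conclusion. So IA₁ proves Aᵍ for every theorem A of IA₁ + (¬¬A → A), and adding these to IA₁
proves nothing new.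
-/

namespace NegInterp

open Formula

mutual
theorem tSubN_var_self (x : ℕ) : ∀ t : Term, tSubN x (.var x) t = t
  | .var m => by by_cases h : m = x <;> simp [tSubN, h]
  | .zero | .empt => rfl
  | .succ t | .sing t | .lh t | .seqc t | .kU t => by simp [tSubN, tSubN_var_self x t]
  | .add s t | .mul s t | .sub s t | .pair s t | .cat s t => by
      simp [tSubN, tSubN_var_self x s, tSubN_var_self x t]
  | .kT e s t => by
      simp [tSubN, tSubN_var_self x e, tSubN_var_self x s, tSubN_var_self x t]
  | .app φ t | .bar φ t => by simp [tSubN, fSubN_var_self x φ, tSubN_var_self x t]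
theorem fSubN_var_self (x : ℕ) : ∀ φ : Func, fSubN x (.var x) φ = φ
  | .fvar _ => rfl
  | .lam y t => by by_cases h : y = x <;> simp [fSubN, h, tSubN_var_self x t]
end

mutual
theorem tSubF_fvar_self (a : ℕ) : ∀ t : Term, tSubF a (.fvar a) t = t
  | .var _ | .zero | .empt => rfl
  | .succ t | .sing t | .lh t | .seqc t | .kU t => by simp [tSubF, tSubF_fvar_self a t]
  | .add s t | .mul s t | .sub s t | .pair s t | .cat s t => by
      simp [tSubF, tSubF_fvar_self a s, tSubF_fvar_self a t]
  | .kT e s t => by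
      simp [tSubF, tSubF_fvar_self a e, tSubF_fvar_self a s, tSubF_fvar_self a t]
  | .app φ t | .bar φ t => by simp [tSubF, fSubF_fvar_self a φ, tSubF_fvar_self a t]
theorem fSubF_fvar_self (a : ℕ) : ∀ φ : Func, fSubF a (.fvar a) φ = φ
  | .fvar b => by by_cases h : b = a <;> simp [fSubF, h]
  | .lam _ t => by simp [fSubF, tSubF_fvar_self a t]
end

mutual
theorem tSubN_of_notMem {n : ℕ} (u : Term) : ∀ {t : Term}, n ∉ tFN t → tSubN n u t = t
  | .var m, h => by simp_all [tFN, tSubN, eq_comm]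
  | .zero, _ | .empt, _ => rfl
  | .succ t, h | .sing t, h | .lh t, h | .seqc t, h | .kU t, h => by
      simp [tSubN, tSubN_of_notMem u (t := t) h]
  | .add s t, h | .mul s t, h | .sub s t, h | .pair s t, h | .cat s t, h => by
      simp only [tFN, Set.mem_union, not_or] at h
      simp [tSubN, tSubN_of_notMem u h.1, tSubN_of_notMem u h.2]
  | .kT e s t, h => by
      simp only [tFN, Set.mem_union, not_or] at h
      simp [tSubN, tSubN_of_notMem u h.1.1, tSubN_of_notMem u h.1.2, tSubN_of_notMem u h.2]
  | .app φ t, h | .bar φ t, h => by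
      simp only [tFN, Set.mem_union, not_or] at h
      simp [tSubN, fSubN_of_notMem u h.1, tSubN_of_notMem u h.2]
theorem fSubN_of_notMem {n : ℕ} (u : Term) : ∀ {φ : Func}, n ∉ fFN φ → fSubN n u φ = φ
  | .fvar _, _ => rfl
  | .lam y t, h => by
      by_cases hy : y = n
      · simp [fSubN, hy]
      · have : n ∉ tFN t := fun hn => h ⟨hn, Ne.symm hy⟩
        simp [fSubN, hy, tSubN_of_notMem u this]
end

mutual
theorem tFForN_of_notMem {n : ℕ} (u : Term) : ∀ {t : Term}, n ∉ tFN t → tFForN u n t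
  | .var _, _ | .zero, _ | .empt, _ => trivial
  | .succ t, h | .sing t, h | .lh t, h | .seqc t, h | .kU t, h => tFForN_of_notMem u (t := t) h
  | .add _ _, h | .mul _ _, h | .sub _ _, h | .pair _ _, h | .cat _ _, h => by
      simp only [tFN, Set.mem_union, not_or] at h
      exact ⟨tFForN_of_notMem u h.1, tFForN_of_notMem u h.2⟩
  | .kT _ _ _, h => by
      simp only [tFN, Set.mem_union, not_or] at h
      exact ⟨tFForN_of_notMem u h.1.1, tFForN_of_notMem u h.1.2, tFForN_of_notMem u h.2⟩
  | .app _ _, h | .bar _ _, h => by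
      simp only [tFN, Set.mem_union, not_or] at h
      exact ⟨fFForN_of_notMem u h.1, tFForN_of_notMem u h.2⟩
theorem fFForN_of_notMem {n : ℕ} (u : Term) : ∀ {φ : Func}, n ∉ fFN φ → fFForN u n φ
  | .fvar _, _ => trivial
  | .lam y _, h => by
      by_cases hy : y = n
      · exact Or.inl hy
      · exact Or.inr (Or.inl fun hn => h ⟨hn, Ne.symm hy⟩)
end

mutual
theorem tFForN_var_self (x : ℕ) : ∀ t : Term, tFForN (.var x) x t
  | .var _ | .zero | .empt => trivial
  | .succ t | .sing t | .lh t | .seqc t | .kU t => tFForN_var_self x t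
  | .add s t | .mul s t | .sub s t | .pair s t | .cat s t =>
      ⟨tFForN_var_self x s, tFForN_var_self x t⟩
  | .kT e s t => ⟨tFForN_var_self x e, tFForN_var_self x s, tFForN_var_self x t⟩
  | .app φ t | .bar φ t => ⟨fFForN_var_self x φ, tFForN_var_self x t⟩
theorem fFForN_var_self (x : ℕ) : ∀ φ : Func, fFForN (.var x) x φ
  | .fvar _ => trivial
  | .lam y t => by
      by_cases h : y = x
      · exact Or.inl h
      · exact Or.inr (Or.inr ⟨by simp [tFN, h], tFForN_var_self x t⟩)
end

mutual
theorem tFForF_fvar_self (a : ℕ) : ∀ t : Term, tFForF (.fvar a) a t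
  | .var _ | .zero | .empt => trivial
  | .succ t | .sing t | .lh t | .seqc t | .kU t => tFForF_fvar_self a t
  | .add s t | .mul s t | .sub s t | .pair s t | .cat s t =>
      ⟨tFForF_fvar_self a s, tFForF_fvar_self a t⟩
  | .kT e s t => ⟨tFForF_fvar_self a e, tFForF_fvar_self a s, tFForF_fvar_self a t⟩
  | .app φ t | .bar φ t => ⟨fFForF_fvar_self a φ, tFForF_fvar_self a t⟩
theorem fFForF_fvar_self (a : ℕ) : ∀ φ : Func, fFForF (.fvar a) a φ
  | .fvar _ => trivial
  | .lam _ t => Or.inr ⟨by simp [fFN], tFForF_fvar_self a t⟩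
end

mutual
def tBound : Term → ℕ
  | .var n => n + 1
  | .zero | .empt => 0
  | .succ t | .sing t | .lh t | .seqc t | .kU t => tBound t
  | .add s t | .mul s t | .sub s t | .pair s t | .cat s t => max (tBound s) (tBound t)
  | .kT e s t => max (max (tBound e) (tBound s)) (tBound t)
  | .app φ t | .bar φ t => max (fBound φ) (tBound t)
def fBound : Func → ℕ
  | .fvar _ => 0
  | .lam _ t => tBound t
end

mutual
theorem notMem_tFN_of_tBound_le {n : ℕ} : ∀ {t : Term}, tBound t ≤ n → n ∉ tFN t
  | .var _, h => by simp only [tBound] at h; simp [tFN]; omega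
  | .zero, _ | .empt, _ => by simp [tFN]
  | .succ t, h | .sing t, h | .lh t, h | .seqc t, h | .kU t, h =>
      notMem_tFN_of_tBound_le (t := t) h
  | .add _ _, h | .mul _ _, h | .sub _ _, h | .pair _ _, h | .cat _ _, h => by
      simp only [tBound, max_le_iff] at h
      simp [tFN, notMem_tFN_of_tBound_le h.1, notMem_tFN_of_tBound_le h.2]
  | .kT _ _ _, h => by
      simp only [tBound, max_le_iff] at h
      simp [tFN, notMem_tFN_of_tBound_le h.1.1, notMem_tFN_of_tBound_le h.1.2,
        notMem_tFN_of_tBound_le h.2]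
  | .app _ _, h | .bar _ _, h => by
      simp only [tBound, max_le_iff] at h
      simp [tFN, notMem_fFN_of_fBound_le h.1, notMem_tFN_of_tBound_le h.2]
theorem notMem_fFN_of_fBound_le {n : ℕ} : ∀ {φ : Func}, fBound φ ≤ n → n ∉ fFN φ
  | .fvar _, _ => by simp [fFN]
  | .lam _ _, h => fun hn => notMem_tFN_of_tBound_le h hn.1
end

theorem subN_var_self (x : ℕ) (A : Formula) : subN x (.var x) A = A := by
  induction A with
  | eq s t => simp [subN, tSubN_var_self]
  | falsum => rfl
  | and _ _ ihA ihB | or _ _ ihA ihB | imp _ _ ihA ihB => simp [subN, ihA, ihB]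
  | allN m _ ih | exN m _ ih => by_cases h : m = x <;> simp [subN, h, ih]
  | allF _ _ ih | exF _ _ ih => simp [subN, ih]

theorem subF_fvar_self (a : ℕ) (A : Formula) : subF a (.fvar a) A = A := by
  induction A with
  | eq s t => simp [subF, tSubF_fvar_self]
  | falsum => rfl
  | and _ _ ihA ihB | or _ _ ihA ihB | imp _ _ ihA ihB => simp [subF, ihA, ihB]
  | allN _ _ ih | exN _ _ ih => simp [subF, ih]
  | allF b _ ih | exF b _ ih => by_cases h : b = a <;> simp [subF, h, ih]

theorem FreeForN_var_self (x : ℕ) (A : Formula) : FreeForN (.var x) x A := by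
  induction A with
  | eq s t => exact ⟨tFForN_var_self x s, tFForN_var_self x t⟩
  | falsum => trivial
  | and _ _ ihA ihB | or _ _ ihA ihB | imp _ _ ihA ihB => exact ⟨ihA, ihB⟩
  | allN m _ ih | exN m _ ih =>
      by_cases h : m = x
      · exact Or.inl h
      · exact Or.inr (Or.inr ⟨by simp [tFN, h], ih⟩)
  | allF _ _ ih | exF _ _ ih => exact Or.inr ⟨by simp [tFF], ih⟩

theorem FreeForF_fvar_self (a : ℕ) (A : Formula) : FreeForF (.fvar a) a A := by
  induction A with
  | eq s t => exact ⟨tFForF_fvar_self a s, tFForF_fvar_self a t⟩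
  | falsum => trivial
  | and _ _ ihA ihB | or _ _ ihA ihB | imp _ _ ihA ihB => exact ⟨ihA, ihB⟩
  | allN _ _ ih | exN _ _ ih => exact Or.inr ⟨by simp [fFN], ih⟩
  | allF b _ ih | exF b _ ih =>
      by_cases h : b = a
      · exact Or.inl h
      · exact Or.inr (Or.inr ⟨by simp [fFF, h], ih⟩)

theorem gTrans_subN (n : ℕ) (u : Term) (A : Formula) :
    gTrans (subN n u A) = subN n u (gTrans A) := by
  induction A with
  | eq | falsum => rfl
  | and _ _ ihA ihB | or _ _ ihA ihB | imp _ _ ihA ihB => simp [subN, gTrans, neg, ihA, ihB]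
  | allN m _ ih | exN m _ ih => by_cases h : m = n <;> simp [subN, gTrans, neg, h, ih]
  | allF _ _ ih | exF _ _ ih => simp [subN, gTrans, neg, ih]

theorem gTrans_subF (a : ℕ) (ψ : Func) (A : Formula) :
    gTrans (subF a ψ A) = subF a ψ (gTrans A) := by
  induction A with
  | eq | falsum => rfl
  | and _ _ ihA ihB | or _ _ ihA ihB | imp _ _ ihA ihB => simp [subF, gTrans, neg, ihA, ihB]
  | allN _ _ ih | exN _ _ ih => simp [subF, gTrans, neg, ih]
  | allF b _ ih | exF b _ ih => by_cases h : b = a <;> simp [subF, gTrans, neg, h, ih]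

theorem freeN_gTrans (A : Formula) : freeN (gTrans A) = freeN A := by
  induction A with
  | eq | falsum => rfl
  | and _ _ ihA ihB | or _ _ ihA ihB | imp _ _ ihA ihB => simp [freeN, gTrans, neg, ihA, ihB]
  | allN _ _ ih | exN _ _ ih | allF _ _ ih | exF _ _ ih => simp [freeN, gTrans, neg, ih]

theorem freeF_gTrans (A : Formula) : freeF (gTrans A) = freeF A := by
  induction A with
  | eq | falsum => rfl
  | and _ _ ihA ihB | or _ _ ihA ihB | imp _ _ ihA ihB => simp [freeF, gTrans, neg, ihA, ihB]
  | allN _ _ ih | exN _ _ ih | allF _ _ ih | exF _ _ ih => simp [freeF, gTrans, neg, ih]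

theorem FreeForN.gTrans {u : Term} {n : ℕ} {A : Formula} (h : FreeForN u n A) :
    FreeForN u n (gTrans A) := by
  induction A with
  | eq | falsum => exact h
  | and _ _ ihA ihB | imp _ _ ihA ihB => exact ⟨ihA h.1, ihB h.2⟩
  | or _ _ ihA ihB => exact ⟨⟨⟨ihA h.1, trivial⟩, ihB h.2, trivial⟩, trivial⟩
  | allN _ _ ih | exN _ _ ih | allF _ _ ih | exF _ _ ih =>
      simp only [FreeForN, NegInterp.gTrans, neg, freeN, freeN_gTrans, Set.union_empty,
        and_true] at h ⊢
      tauto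

theorem FreeForF.gTrans {ψ : Func} {a : ℕ} {A : Formula} (h : FreeForF ψ a A) :
    FreeForF ψ a (gTrans A) := by
  induction A with
  | eq | falsum => exact h
  | and _ _ ihA ihB | imp _ _ ihA ihB => exact ⟨ihA h.1, ihB h.2⟩
  | or _ _ ihA ihB => exact ⟨⟨⟨ihA h.1, trivial⟩, ihB h.2, trivial⟩, trivial⟩
  | allN _ _ ih | exN _ _ ih | allF _ _ ih | exF _ _ ih =>
      simp only [FreeForF, NegInterp.gTrans, neg, freeF, freeF_gTrans, Set.union_empty,
        and_true] at h ⊢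
      tauto

/-- Deriving `ctxImp Γ A` simulates a natural-deduction derivation of `A` from the open
assumptions `Γ`. -/
def ctxImp : List Formula → Formula → Formula
  | [], A => A
  | H :: Γ, A => H.imp (ctxImp Γ A)

theorem ctxImp_append (Γ : List Formula) (X A : Formula) :
    ctxImp (Γ ++ [X]) A = ctxImp Γ (X.imp A) := by
  induction Γ with
  | nil => rfl
  | cons H Γ ih => simp [ctxImp, ih]

section

variable {T : Set Formula}

namespace Prov

theorem of_axioms_provable {T' : Set Formula} (hT : ∀ A ∈ T, Prov T' A) {A : Formula}
    (h : Prov T A) : Prov T' A := by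
  induction h with
  | ax h => exact hT _ h
  | k => exact k
  | s => exact s
  | andI => exact andI
  | andE1 => exact andE1
  | andE2 => exact andE2
  | orI1 => exact orI1
  | orI2 => exact orI2
  | orE => exact orE
  | exfalso => exact exfalso
  | mp _ _ ih₁ ih₂ => exact mp ih₁ ih₂
  | allNE h => exact allNE h
  | allNI h _ ih => exact allNI h ih
  | exNI h => exact exNI h
  | exNE h _ ih => exact exNE h ih
  | allFE h => exact allFE h
  | allFI h _ ih => exact allFI h ih
  | exFI h => exact exFI h
  | exFE h _ ih => exact exFE h ih
  | genN _ ih => exact genN ih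
  | genF _ ih => exact genF ih

theorem mono {T' : Set Formula} (hs : T ⊆ T') {A : Formula} (h : Prov T A) : Prov T' A :=
  h.of_axioms_provable fun _ hA => ax (hs hA)

theorem imp_self (A : Formula) : Prov T (A.imp A) :=
  mp (mp s (k (B := A.imp A))) k

theorem imp_trans {A B C : Formula} (h₁ : Prov T (A.imp B)) (h₂ : Prov T (B.imp C)) :
    Prov T (A.imp C) :=
  mp (mp s (mp k h₂)) h₁

theorem imp_comm {A B C : Formula} (h : Prov T (A.imp (B.imp C))) : Prov T (B.imp (A.imp C)) :=
  imp_trans k (mp s h)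

theorem imp_and {H A B : Formula} (h₁ : Prov T (H.imp A)) (h₂ : Prov T (H.imp B)) :
    Prov T (H.imp (A.and B)) :=
  mp (mp s (imp_trans h₁ andI)) h₂

theorem allN_imp_self (x : ℕ) (A : Formula) : Prov T ((allN x A).imp A) := by
  simpa only [subN_var_self] using allNE (T := T) (FreeForN_var_self x A)

theorem allF_imp_self (a : ℕ) (A : Formula) : Prov T ((allF a A).imp A) := by
  simpa only [subF_fvar_self] using allFE (T := T) (FreeForF_fvar_self a A)

theorem ctxImp_of {A : Formula} (h : Prov T A) : ∀ Γ, Prov T (ctxImp Γ A)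
  | [] => h
  | _ :: Γ => mp k (ctxImp_of h Γ)

theorem ctxImp_distrib : ∀ (Γ : List Formula) (X Y : Formula),
    Prov T ((ctxImp Γ (X.imp Y)).imp ((ctxImp Γ X).imp (ctxImp Γ Y)))
  | [], _, _ => imp_self _
  | _ :: Γ, X, Y => imp_trans (mp s (mp k (ctxImp_distrib Γ X Y))) s

theorem ctxImp_mp {Γ : List Formula} {X Y : Formula}
    (h₁ : Prov T (ctxImp Γ (X.imp Y))) (h₂ : Prov T (ctxImp Γ X)) : Prov T (ctxImp Γ Y) :=
  mp (mp (ctxImp_distrib Γ X Y) h₁) h₂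

theorem imp_ctxImp (A : Formula) : ∀ Γ, Prov T (A.imp (ctxImp Γ A))
  | [] => imp_self A
  | _ :: Γ => imp_trans (imp_ctxImp A Γ) k

theorem ctxImp_hyp {A : Formula} : ∀ {Γ : List Formula}, A ∈ Γ → Prov T (ctxImp Γ A)
  | _ :: Γ, .head _ => imp_ctxImp A Γ
  | _ :: _, .tail _ h => mp k (ctxImp_hyp h)

theorem ctxImp_intro {Γ : List Formula} {X Y : Formula} (h : Prov T (ctxImp (Γ ++ [X]) Y)) :
    Prov T (ctxImp Γ (X.imp Y)) :=
  ctxImp_append Γ X Y ▸ h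

theorem neg_imp_neg {X Y : Formula} (h : Prov T (X.imp Y)) : Prov T ((neg Y).imp (neg X)) :=
  show Prov T (ctxImp [neg Y, X] falsum) from
    ctxImp_mp (X := Y) (ctxImp_hyp (by simp [neg]))
      (ctxImp_mp (ctxImp_of h _) (ctxImp_hyp (by simp)))

theorem imp_nneg (X : Formula) : Prov T (X.imp (nneg X)) :=
  imp_comm (imp_self (neg X))

theorem nneg_imp_nneg {X Y : Formula} (h : Prov T (X.imp Y)) :
    Prov T ((nneg X).imp (nneg Y)) :=
  neg_imp_neg (neg_imp_neg h)

end Prov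

def Stable (T : Set Formula) (A : Formula) : Prop := Prov T ((nneg A).imp A)

open Prov (mp imp_self imp_trans imp_comm imp_and neg_imp_neg imp_nneg nneg_imp_nneg ctxImp_of
  ctxImp_mp ctxImp_hyp ctxImp_intro)

theorem stable_falsum : Stable T falsum :=
  mp (imp_comm (imp_self _)) (imp_self falsum)

theorem stable_neg (A : Formula) : Stable T (neg A) :=
  neg_imp_neg (imp_nneg A)

theorem Stable.and {A B : Formula} (hA : Stable T A) (hB : Stable T B) : Stable T (A.and B) :=
  imp_and (imp_trans (nneg_imp_nneg Prov.andE1) hA) (imp_trans (nneg_imp_nneg Prov.andE2) hB)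

theorem Stable.imp (P : Formula) {Q : Formula} (hQ : Stable T Q) : Stable T (P.imp Q) := by
  let Γ := [nneg (P.imp Q), P, neg Q]
  have : Prov T (ctxImp (Γ ++ [P.imp Q]) falsum) :=
    ctxImp_mp (X := Q) (ctxImp_hyp (by simp [Γ, neg, nneg]))
      (ctxImp_mp (X := P) (ctxImp_hyp (by simp)) (ctxImp_hyp (by simp [Γ])))
  have : Prov T (ctxImp Γ falsum) :=
    ctxImp_mp (X := neg (P.imp Q)) (ctxImp_hyp (by simp [Γ, neg, nneg])) (ctxImp_intro this)
  exact ctxImp_mp (Γ := [_, _]) (ctxImp_of hQ _) (ctxImp_intro this)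

theorem Stable.allN (x : ℕ) {A : Formula} (h : Stable T A) : Stable T (Formula.allN x A) :=
  Prov.allNI (by simp [freeN, nneg, neg]) (imp_trans (nneg_imp_nneg (Prov.allN_imp_self x A)) h)

theorem Stable.allF (a : ℕ) {A : Formula} (h : Stable T A) : Stable T (Formula.allF a A) :=
  Prov.allFI (by simp [freeF, nneg, neg]) (imp_trans (nneg_imp_nneg (Prov.allF_imp_self a A)) h)

theorem Stable.of_em {A : Formula} (h : Prov T (A.or (neg A))) : Stable T A := by
  have : Prov T (ctxImp [neg A, nneg A] A) :=
    ctxImp_mp (ctxImp_of Prov.exfalso _)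
      (ctxImp_mp (X := neg A) (ctxImp_hyp (by simp [neg, nneg])) (ctxImp_hyp (by simp [neg, nneg])))
  exact mp (mp (mp Prov.orE Prov.k) this) h

theorem Stable.weakOr_elim {A B C : Formula} (hC : Stable T C) :
    Prov T ((A.imp C).imp ((B.imp C).imp ((neg ((neg A).and (neg B))).imp C))) := by
  let Γ := [A.imp C, B.imp C, neg ((neg A).and (neg B)), neg C]
  have refute (X : Formula) (hX : X.imp C ∈ Γ) : Prov T (ctxImp Γ (neg X)) :=
    ctxImp_intro <| ctxImp_mp (X := C) (ctxImp_hyp (by simp [Γ, neg]))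
      (ctxImp_mp (X := X) (ctxImp_hyp (by simp [hX])) (ctxImp_hyp (by simp)))
  have : Prov T (ctxImp Γ falsum) :=
    ctxImp_mp (X := (neg A).and (neg B)) (ctxImp_hyp (by simp [Γ, neg]))
      (ctxImp_mp (ctxImp_mp (ctxImp_of Prov.andI Γ) (refute A (by simp [Γ])))
        (refute B (by simp [Γ])))
  exact ctxImp_mp (Γ := [_, _, _]) (ctxImp_of hC _) (ctxImp_intro this)

theorem Stable.weakExN_elim {x : ℕ} {A C : Formula} (hC : Stable T C) (hx : x ∉ freeN C)
    (h : Prov T (A.imp C)) : Prov T ((neg (Formula.allN x (neg A))).imp C) :=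
  imp_trans (neg_imp_neg (Prov.allNI (by simpa [freeN, neg]) (neg_imp_neg h))) hC

theorem Stable.weakExF_elim {a : ℕ} {A C : Formula} (hC : Stable T C) (ha : a ∉ freeF C)
    (h : Prov T (A.imp C)) : Prov T ((neg (Formula.allF a (neg A))).imp C) :=
  imp_trans (neg_imp_neg (Prov.allFI (by simpa [freeF, neg]) (neg_imp_neg h))) hC

theorem stable_gTrans (hT : ∀ s t, Stable T (.eq s t)) : ∀ A, Stable T (gTrans A)
  | .eq s t => hT s t
  | .falsum => stable_falsum
  | .and A B => (stable_gTrans hT A).and (stable_gTrans hT B)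
  | .imp _ B => (stable_gTrans hT B).imp _
  | .allN x A => (stable_gTrans hT A).allN x
  | .allF a A => (stable_gTrans hT A).allF a
  | .or _ _ | .exN _ _ | .exF _ _ => stable_neg _

end

namespace IA1

theorem prov_of_valid {s t : Term} (h : ∀ ρ σ, evalT ρ σ s = evalT ρ σ t) :
    Prov IA1 (.eq s t) :=
  .ax (Or.inl (Or.inl (Or.inl (Or.inl ⟨s, t, rfl, h⟩))))

theorem prov_leibniz (n : ℕ) {s t : Term} {A : Formula} (hs : FreeForN s n A)
    (ht : FreeForN t n A) : Prov IA1 ((Formula.eq s t).imp ((subN n s A).imp (subN n t A))) :=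
  .ax (Or.inl (Or.inl (Or.inl (Or.inr ⟨n, s, t, A, hs, ht, rfl⟩))))

theorem prov_succ_ne_zero (t : Term) : Prov IA1 (neg (.eq (.succ t) .zero)) :=
  .ax (Or.inl (Or.inl (Or.inr (Or.inr ⟨t, rfl⟩))))

theorem prov_induction (x : ℕ) (A : Formula) :
    Prov IA1 (((subN x .zero A).and (Formula.allN x (A.imp (subN x (.succ (.var x)) A)))).imp
      (Formula.allN x A)) :=
  .ax (Or.inl (Or.inr ⟨x, A, rfl⟩))

theorem prov_eq_refl (u : Term) : Prov IA1 (.eq u u) :=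
  prov_of_valid fun _ _ => rfl

theorem prov_eq_trans (r s t : Term) :
    Prov IA1 ((Formula.eq r s).imp ((Formula.eq s t).imp (.eq r t))) := by
  have hn : tBound r ∉ tFN r := notMem_tFN_of_tBound_le le_rfl
  have h := prov_leibniz (tBound r) (s := s) (t := t) (A := .eq r (.var (tBound r)))
    ⟨tFForN_of_notMem s hn, trivial⟩ ⟨tFForN_of_notMem t hn, trivial⟩
  simp only [subN, tSubN, if_true, tSubN_of_notMem _ hn] at h
  exact Prov.imp_comm h

theorem prov_eq_zero_or_ne (u : Term) :
    Prov IA1 ((Formula.eq u .zero).or (neg (.eq u .zero))) := by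
  let A : Formula := (Formula.eq (.var 0) .zero).or (neg (.eq (.var 0) .zero))
  have base : Prov IA1 (subN 0 .zero A) := Prov.mp Prov.orI1 (prov_eq_refl .zero)
  have step : Prov IA1 (Formula.allN 0 (A.imp (subN 0 (.succ (.var 0)) A))) :=
    Prov.genN (Prov.mp Prov.k (Prov.mp Prov.orI2 (prov_succ_ne_zero (.var 0))))
  have := Prov.mp (Prov.allNE (u := u) (by simp [A, FreeForN, tFForN, neg]))
    (Prov.mp (prov_induction 0 A) (Prov.mp (Prov.mp Prov.andI base) step))
  simpa [A, subN, tSubN, neg] using this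

def tDist (s t : Term) : Term := .add (.sub s t) (.sub t s)

theorem prov_tDist_eq_zero (s t : Term) :
    Prov IA1 ((Formula.eq s t).imp (.eq (tDist s t) .zero)) := by
  have hn : tBound s ∉ tFN s := notMem_tFN_of_tBound_le le_rfl
  have h := prov_leibniz (tBound s) (s := s) (t := t) (A := .eq (tDist s (.var (tBound s))) .zero)
    (by simp [FreeForN, tFForN, tDist, tFForN_of_notMem _ hn])
    (by simp [FreeForN, tFForN, tDist, tFForN_of_notMem _ hn])
  simp only [subN, tDist, tSubN, if_true, tSubN_of_notMem _ hn] at h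
  exact Prov.mp (Prov.imp_comm h) (prov_of_valid fun _ _ => by simp [evalT])

theorem prov_eq_of_tDist_eq_zero (s t : Term) :
    Prov IA1 ((Formula.eq (tDist s t) .zero).imp (.eq s t)) := by
  set n := max (tBound s) (tBound t)
  have hs : n ∉ tFN s := notMem_tFN_of_tBound_le (le_max_left _ _)
  have ht : n ∉ tFN t := notMem_tFN_of_tBound_le (le_max_right _ _)
  -- `C` denotes `if n = 0 then s else t`; as `tDist s t = 0` forces `s = t`, the equation
  -- `C[tDist s t/n] = t` is valid, and Leibniz's law turns it into `C[0/n] = t`.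
  let C : Term := .add (.mul s (.sub (.succ .zero) (.var n)))
    (.mul t (.sub (.succ .zero) (.sub (.succ .zero) (.var n))))
  have h := prov_leibniz n (s := tDist s t) (t := .zero) (A := .eq C t)
    (by simp [C, FreeForN, tFForN, tFForN_of_notMem _ hs, tFForN_of_notMem _ ht])
    (by simp [C, FreeForN, tFForN, tFForN_of_notMem _ hs, tFForN_of_notMem _ ht])
  simp only [subN, tSubN_of_notMem _ ht] at h
  have hC : Prov IA1 (.eq (tSubN n (tDist s t) C) t) := by
    refine prov_of_valid fun ρ σ => ?_
    simp only [C, tDist, tSubN, if_true, tSubN_of_notMem _ hs, tSubN_of_notMem _ ht, evalT]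
    rcases eq_or_ne (evalT ρ σ s) (evalT ρ σ t) with h | h
    · simp [h]
    · have : 1 - ((evalT ρ σ s - evalT ρ σ t) + (evalT ρ σ t - evalT ρ σ s)) = 0 := by omega
      simp [this]
  have hs0 : Prov IA1 (.eq s (tSubN n .zero C)) :=
    prov_of_valid fun _ _ => by simp [C, tSubN, tSubN_of_notMem _ hs, tSubN_of_notMem _ ht, evalT]
  exact Prov.imp_trans (Prov.mp (Prov.imp_comm h) hC) (Prov.mp (prov_eq_trans _ _ _) hs0)

theorem stable_eq (s t : Term) : Stable IA1 (.eq s t) :=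
  Prov.imp_trans (Prov.nneg_imp_nneg (prov_tDist_eq_zero s t))
    (Prov.imp_trans (Stable.of_em (prov_eq_zero_or_ne _)) (prov_eq_of_tDist_eq_zero s t))

theorem gTrans_mem {A : Formula} (h : A ∈ IA1) : gTrans A ∈ IA1 := by
  rcases h with ((((⟨s, t, rfl, hv⟩ | ⟨n, s, t, B, hs, ht, rfl⟩) | (⟨s, t, rfl⟩ | ⟨t, rfl⟩)) |
    ⟨x, B, rfl⟩) | ⟨x, t, s, hf, rfl⟩)
  · exact Or.inl (Or.inl (Or.inl (Or.inl ⟨s, t, rfl, hv⟩)))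
  · refine Or.inl (Or.inl (Or.inl (Or.inr ⟨n, s, t, gTrans B, hs.gTrans, ht.gTrans, ?_⟩)))
    simp only [gTrans, gTrans_subN]
  · exact Or.inl (Or.inl (Or.inr (Or.inl ⟨s, t, rfl⟩)))
  · exact Or.inl (Or.inl (Or.inr (Or.inr ⟨t, rfl⟩)))
  · refine Or.inl (Or.inr ⟨x, gTrans B, ?_⟩)
    simp only [gTrans, gTrans_subN]
  · exact Or.inr ⟨x, t, s, hf, rfl⟩

end IA1

theorem prov_gTrans_of_prov_DNE {S T : Set Formula} (hS : ∀ A ∈ S, Prov T (gTrans A))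
    (hT : ∀ s t, Stable T (.eq s t)) {A : Formula} (h : Prov (S ∪ DNE) A) :
    Prov T (gTrans A) := by
  induction h with
  | ax h =>
      rcases h with h | ⟨B, rfl⟩
      exacts [hS _ h, stable_gTrans hT B]
  | k => exact Prov.k
  | s => exact Prov.s
  | andI => exact Prov.andI
  | andE1 => exact Prov.andE1
  | andE2 => exact Prov.andE2
  | orI1 => exact Prov.imp_comm Prov.andE1
  | orI2 => exact Prov.imp_comm Prov.andE2
  | @orE _ _ C => exact (stable_gTrans hT C).weakOr_elim
  | exfalso => exact Prov.exfalso
  | mp _ _ ih₁ ih₂ => exact Prov.mp ih₁ ih₂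
  | allNE h =>
      simp only [gTrans, gTrans_subN]
      exact Prov.allNE h.gTrans
  | allNI h _ ih => exact Prov.allNI (by rwa [freeN_gTrans]) ih
  | exNI h =>
      simp only [gTrans, gTrans_subN]
      exact Prov.imp_comm (Prov.allNE (A := neg _) ⟨h.gTrans, trivial⟩)
  | @exNE _ _ C h _ ih => exact (stable_gTrans hT C).weakExN_elim (by rwa [freeN_gTrans]) ih
  | allFE h =>
      simp only [gTrans, gTrans_subF]
      exact Prov.allFE h.gTrans
  | allFI h _ ih => exact Prov.allFI (by rwa [freeF_gTrans]) ih
  | exFI h =>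
      simp only [gTrans, gTrans_subF]
      exact Prov.imp_comm (Prov.allFE (A := neg _) ⟨h.gTrans, trivial⟩)
  | @exFE _ _ C h _ ih => exact (stable_gTrans hT C).weakExF_elim (by rwa [freeF_gTrans]) ih
  | genN _ ih => exact Prov.genN ih
  | genF _ ih => exact Prov.genF ih

/-- The minimum classical extension of IA₁ is IA₁ itself: the
Gödel–Gentzen negative translations of all axioms of IA₁ are provable in IA₁,
the negative translations of the rules of inference are admissible for IA₁
(so IA₁ proves the translation of every theorem of IA₁ + (¬¬A→A)), and hence
(IA₁)^{+g} = IA₁. -/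
theorem statement0 :
    (∀ A ∈ IA1, Prov IA1 (gTrans A)) ∧
    (∀ A : Formula, Prov (IA1 ∪ DNE) A → Prov IA1 (gTrans A)) ∧
    SameTheory (minClassExt IA1) IA1 := by
  have hAx : ∀ A ∈ IA1, Prov IA1 (gTrans A) := fun A hA => .ax (IA1.gTrans_mem hA)
  have hThm : ∀ A, Prov (IA1 ∪ DNE) A → Prov IA1 (gTrans A) :=
    fun _ => prov_gTrans_of_prov_DNE hAx IA1.stable_eq
  refine ⟨hAx, hThm, fun A => ⟨Prov.of_axioms_provable ?_, Prov.mono Set.subset_union_left⟩⟩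
  rintro B (hB | ⟨C, hC, rfl⟩)
  exacts [.ax hB, hThm C hC]

end NegInterp
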